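/- arXiv:2407.15853 — 6 statements merged into one kernel-verified Lean document; each statement's English description precedes it below -/
import Mathlib

section
/- Let R be a zero-symmetric right near-ring, M a near-ring module over R, and P an R-ideal of M with RM ⊄ P. For each v ∈ {0,2,3}: if P is a v-prime R-ideal of M, then (P : M) = {r ∈ R : rM ⊆ P} is a v-prime ideal of R. -/
open Pointwise

/-- A zero-symmetric right near-ring: `(R,+)` is a (not necessarily abelian) group,
`(R,·)` is a semigroup, right distributivity holds, and `r * 0 = 0`. -/
class NearRing (R : Type*) extends AddGroup R, Semigroup R where
  right_distrib : ∀ a b c : R, (a + b) * c = a * c + b * c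
  mul_zero : ∀ a : R, a * 0 = 0

/-- A (left) near-ring module over a right near-ring `R`. -/
class NearRingModule (R : Type*) [NearRing R] (M : Type*) [AddGroup M] extends
    SMul R M where
  add_smul : ∀ (r s : R) (m : M), (r + s) • m = r • m + s • m
  mul_smul : ∀ (r s : R) (m : M), (r * s) • m = r • s • m

/-- A subgroup of a (not necessarily abelian) additive group, as a set. -/
def IsSubgrp {G : Type*} [AddGroup G] (H : Set G) : Prop :=
  (0 : G) ∈ H ∧ (∀ x ∈ H, ∀ y ∈ H, x + y ∈ H) ∧ ∀ x ∈ H, -x ∈ H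

/-- A normal subgroup of an additive group, as a set. -/
def IsNormalSubgrp {G : Type*} [AddGroup G] (H : Set G) : Prop :=
  IsSubgrp H ∧ ∀ g : G, ∀ h ∈ H, g + h + -g ∈ H

/-- An `R`-submodule of a near-ring module `M`: a subgroup `N` with `RN ⊆ N`. -/
def IsRSubmodule (R : Type*) [NearRing R] {M : Type*} [AddGroup M]
    [NearRingModule R M] (N : Set M) : Prop :=
  IsSubgrp N ∧ ∀ r : R, ∀ n ∈ N, r • n ∈ N

/-- An `R`-ideal of a near-ring module `M`: a normal subgroup `P` with
`r • (m + p) - r • m ∈ P`. -/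
def IsRIdeal (R : Type*) [NearRing R] {M : Type*} [AddGroup M]
    [NearRingModule R M] (P : Set M) : Prop :=
  IsNormalSubgrp P ∧ ∀ (r : R) (m : M), ∀ p ∈ P, r • (m + p) - r • m ∈ P

/-- A (two-sided) ideal of the near-ring `R`. -/
def IsIdeal {R : Type*} [NearRing R] (I : Set R) : Prop :=
  IsNormalSubgrp I ∧ (∀ i ∈ I, ∀ r : R, i * r ∈ I) ∧
    ∀ r₁ r₂ : R, ∀ i ∈ I, r₁ * (r₂ + i) - r₁ * r₂ ∈ I

/-- A left `R`-subgroup of `R`: a subgroup `A` of `(R,+)` with `RA ⊆ A`. -/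
def IsLeftRSubgroup {R : Type*} [NearRing R] (A : Set R) : Prop :=
  IsSubgrp A ∧ ∀ r : R, ∀ a ∈ A, r * a ∈ A

/-- `P` satisfies the 0-classical prime condition: `ABN ⊆ P` implies `AN ⊆ P` or
`BN ⊆ P` for all ideals `A, B` of `R` and all `R`-submodules `N` of `M`. -/
def Classical0Prime (R : Type*) [NearRing R] {M : Type*} [AddGroup M]
    [NearRingModule R M] (P : Set M) : Prop :=
  ∀ (A B : Set R) (N : Set M), IsIdeal A → IsIdeal B → IsRSubmodule R N →
    (A * B) • N ⊆ P → A • N ⊆ P ∨ B • N ⊆ P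

/-- `P` satisfies the 2-classical prime condition (with left `R`-subgroups `A, B`). -/
def Classical2Prime (R : Type*) [NearRing R] {M : Type*} [AddGroup M]
    [NearRingModule R M] (P : Set M) : Prop :=
  ∀ (A B : Set R) (N : Set M), IsLeftRSubgroup A → IsLeftRSubgroup B →
    IsRSubmodule R N → (A * B) • N ⊆ P → A • N ⊆ P ∨ B • N ⊆ P

/-- `P` satisfies the 3-classical prime condition: `(aR)(bR)N ⊆ P` implies
`aN ⊆ P` or `bN ⊆ P`. -/
def Classical3Prime (R : Type*) [NearRing R] {M : Type*} [AddGroup M]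
    [NearRingModule R M] (P : Set M) : Prop :=
  ∀ (a b : R) (N : Set M), IsRSubmodule R N →
    ((({a} : Set R) * Set.univ) * (({b} : Set R) * Set.univ)) • N ⊆ P →
    a • N ⊆ P ∨ b • N ⊆ P

/-- `P` satisfies the c-classical prime condition: `(aRb)N ⊆ P` implies
`aN ⊆ P` or `bN ⊆ P`. -/
def ClassicalCPrime (R : Type*) [NearRing R] {M : Type*} [AddGroup M]
    [NearRingModule R M] (P : Set M) : Prop :=
  ∀ (a b : R) (N : Set M), IsRSubmodule R N →
    (({a} : Set R) * Set.univ * ({b} : Set R)) • N ⊆ P →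
    a • N ⊆ P ∨ b • N ⊆ P

/-- `P` satisfies the 0-prime (Dauns/Juglal) condition: `AB ⊆ P` implies `AM ⊆ P` or
`B ⊆ P` for all ideals `A` of `R` and `R`-submodules `B` of `M`. -/
def Prime0 (R : Type*) [NearRing R] {M : Type*} [AddGroup M]
    [NearRingModule R M] (P : Set M) : Prop :=
  ∀ (A : Set R) (B : Set M), IsIdeal A → IsRSubmodule R B →
    A • B ⊆ P → A • (Set.univ : Set M) ⊆ P ∨ B ⊆ P

/-- `P` satisfies the 2-prime condition (with left `R`-subgroups `A`). -/
def Prime2 (R : Type*) [NearRing R] {M : Type*} [AddGroup M]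
    [NearRingModule R M] (P : Set M) : Prop :=
  ∀ (A : Set R) (B : Set M), IsLeftRSubgroup A → IsRSubmodule R B →
    A • B ⊆ P → A • (Set.univ : Set M) ⊆ P ∨ B ⊆ P

/-- `P` satisfies the 3-prime condition: `aRm ⊆ P` implies `aM ⊆ P` or `m ∈ P`. -/
def Prime3 (R : Type*) [NearRing R] {M : Type*} [AddGroup M]
    [NearRingModule R M] (P : Set M) : Prop :=
  ∀ (a : R) (m : M), (({a} : Set R) * Set.univ) • ({m} : Set M) ⊆ P →
    a • (Set.univ : Set M) ⊆ P ∨ m ∈ P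

/-- `P` satisfies the c-prime (completely prime) condition: `rm ∈ P` implies
`rM ⊆ P` or `m ∈ P`. -/
def PrimeC (R : Type*) [NearRing R] {M : Type*} [AddGroup M]
    [NearRingModule R M] (P : Set M) : Prop :=
  ∀ (r : R) (m : M), r • m ∈ P → r • (Set.univ : Set M) ⊆ P ∨ m ∈ P

/-- `Q` is a 0-prime ideal of `R`: a proper ideal such that `AB ⊆ Q` implies
`A ⊆ Q` or `B ⊆ Q` for all ideals `A, B` of `R`. -/
def Prime0IdealR {R : Type*} [NearRing R] (Q : Set R) : Prop :=
  IsIdeal Q ∧ Q ≠ Set.univ ∧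
    ∀ A B : Set R, IsIdeal A → IsIdeal B → A * B ⊆ Q → A ⊆ Q ∨ B ⊆ Q

/-- `Q` is a 2-prime ideal of `R` (with left `R`-subgroups `A, B`). -/
def Prime2IdealR {R : Type*} [NearRing R] (Q : Set R) : Prop :=
  IsIdeal Q ∧ Q ≠ Set.univ ∧
    ∀ A B : Set R, IsLeftRSubgroup A → IsLeftRSubgroup B → A * B ⊆ Q → A ⊆ Q ∨ B ⊆ Q

/-- `Q` is a 3-prime ideal of `R`: a proper ideal such that `aRb ⊆ Q` implies
`a ∈ Q` or `b ∈ Q`. -/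
def Prime3IdealR {R : Type*} [NearRing R] (Q : Set R) : Prop :=
  IsIdeal Q ∧ Q ≠ Set.univ ∧
    ∀ a b : R, ({a} : Set R) * Set.univ * ({b} : Set R) ⊆ Q → a ∈ Q ∨ b ∈ Q

/-- `Q` is a c-prime (completely prime) ideal of `R`. -/
def PrimeCIdealR {R : Type*} [NearRing R] (Q : Set R) : Prop :=
  IsIdeal Q ∧ Q ≠ Set.univ ∧ ∀ a b : R, a * b ∈ Q → a ∈ Q ∨ b ∈ Q

section Aux

variable {R M : Type*} [NearRing R] [AddGroup M] [NearRingModule R M]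

lemma nr_zero_smul (m : M) : (0 : R) • m = 0 := by
  have h := NearRingModule.add_smul (0 : R) 0 m
  rw [add_zero] at h
  exact (left_eq_add.mp h)

lemma nr_neg_smul (r : R) (m : M) : (-r) • m = -(r • m) := by
  have h := NearRingModule.add_smul r (-r) m
  rw [add_neg_cancel, nr_zero_smul] at h
  exact (neg_eq_of_add_eq_zero_right h.symm).symm

lemma nr_sub_smul (r s : R) (m : M) : (r - s) • m = r • m - s • m := by
  rw [sub_eq_add_neg, NearRingModule.add_smul, nr_neg_smul, ← sub_eq_add_neg]

lemma nr_smul_zero (r : R) : r • (0 : M) = 0 := by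
  calc r • (0 : M) = r • ((0 : R) • (0 : M)) := by rw [nr_zero_smul]
    _ = (r * 0) • (0 : M) := (NearRingModule.mul_smul r 0 (0 : M)).symm
    _ = (0 : R) • (0 : M) := by rw [NearRing.mul_zero]
    _ = 0 := nr_zero_smul _

/-- Every ideal of `R` is closed under left multiplication. -/
lemma nr_ideal_left {I : Set R} (hI : IsIdeal I) : ∀ r : R, ∀ i ∈ I, r * i ∈ I := by
  intro r i hi
  have h := hI.2.2 r 0 i hi
  rwa [NearRing.mul_zero, zero_add, sub_zero] at h

/-- For a left-closed subgroup `B` of `R` and `m : M`, `B • {m}` is an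
`R`-submodule of `M`. -/
lemma nr_smul_singleton_submodule {B : Set R} (hB : IsSubgrp B)
    (hBl : ∀ r : R, ∀ b ∈ B, r * b ∈ B) (m : M) :
    IsRSubmodule R (B • ({m} : Set M)) := by
  have mem : ∀ x, x ∈ B • ({m} : Set M) ↔ ∃ b ∈ B, b • m = x := by
    intro x
    constructor
    · rintro ⟨b, hb, y, hy, rfl⟩
      exact ⟨b, hb, by rw [Set.mem_singleton_iff.mp hy]⟩
    · rintro ⟨b, hb, rfl⟩
      exact ⟨b, hb, m, rfl, rfl⟩
  refine ⟨⟨?_, ?_, ?_⟩, ?_⟩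
  · exact (mem 0).mpr ⟨0, hB.1, nr_zero_smul m⟩
  · intro x hx y hy
    obtain ⟨b, hb, rfl⟩ := (mem x).mp hx
    obtain ⟨c, hc, rfl⟩ := (mem y).mp hy
    exact (mem _).mpr ⟨b + c, hB.2.1 b hb c hc, NearRingModule.add_smul b c m⟩
  · intro x hx
    obtain ⟨b, hb, rfl⟩ := (mem x).mp hx
    exact (mem _).mpr ⟨-b, hB.2.2 b hb, nr_neg_smul b m⟩
  · intro r n hn
    obtain ⟨b, hb, rfl⟩ := (mem n).mp hn
    exact (mem _).mpr ⟨r * b, hBl r b hb, NearRingModule.mul_smul r b m⟩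

end Aux

/-- if `P` is a `v`-prime `R`-ideal of `M` (`v ∈ {0,2,3}`, with `RM ⊄ P`),
then `(P : M) = {r ∈ R : rM ⊆ P}` is a `v`-prime ideal of `R`. -/
theorem stmt_0 {R M : Type*} [NearRing R] [AddGroup M] [NearRingModule R M]
    (P : Set M) (hP : IsRIdeal R P)
    (hRM : ¬ (Set.univ : Set R) • (Set.univ : Set M) ⊆ P) :
    (Prime0 R P → Prime0IdealR {r : R | ∀ m : M, r • m ∈ P}) ∧
    (Prime2 R P → Prime2IdealR {r : R | ∀ m : M, r • m ∈ P}) ∧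
    (Prime3 R P → Prime3IdealR {r : R | ∀ m : M, r • m ∈ P}) := by
  set Q : Set R := {r : R | ∀ m : M, r • m ∈ P} with hQdef
  have hP0 : (0 : M) ∈ P := hP.1.1.1
  -- Q is an ideal of R
  have hQideal : IsIdeal Q := by
    refine ⟨⟨⟨?_, ?_, ?_⟩, ?_⟩, ?_, ?_⟩
    · intro m; rw [nr_zero_smul]; exact hP0
    · intro x hx y hy m
      rw [NearRingModule.add_smul]
      exact hP.1.1.2.1 _ (hx m) _ (hy m)
    · intro x hx m
      rw [nr_neg_smul]
      exact hP.1.1.2.2 _ (hx m)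
    · intro g h hh m
      have : (g + h + -g) • m = g • m + h • m + -(g • m) := by
        rw [NearRingModule.add_smul, NearRingModule.add_smul, nr_neg_smul]
      rw [this]
      exact hP.1.2 (g • m) (h • m) (hh m)
    · intro i hi r m
      rw [NearRingModule.mul_smul]
      exact hi (r • m)
    · intro r₁ r₂ i hi m
      have : (r₁ * (r₂ + i) - r₁ * r₂) • m
          = r₁ • (r₂ • m + i • m) - r₁ • (r₂ • m) := by
        rw [nr_sub_smul, NearRingModule.mul_smul, NearRingModule.mul_smul,
          NearRingModule.add_smul]
      rw [this]
      exact hP.2 r₁ (r₂ • m) (i • m) (hi m)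
  -- Q is proper
  have hQne : Q ≠ Set.univ := by
    intro h
    apply hRM
    rintro x ⟨r, -, m, -, rfl⟩
    show r • m ∈ P
    have hr : r ∈ Q := h.symm ▸ Set.mem_univ r
    exact hr m
  -- Q membership characterisation from A • univ ⊆ P
  have hmemQ : ∀ a : R, a • (Set.univ : Set M) ⊆ P → a ∈ Q := by
    intro a ha m
    exact ha (Set.smul_mem_smul_set (Set.mem_univ m))
  refine ⟨?_, ?_, ?_⟩
  · -- 0-prime case
    intro h0
    refine ⟨hQideal, hQne, ?_⟩
    intro A B hA hB hAB
    by_cases hc : A • (Set.univ : Set M) ⊆ P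
    · left; intro a ha m
      exact hc (Set.smul_mem_smul ha (Set.mem_univ m))
    · right; intro b hb m
      have hsub : IsRSubmodule R (B • ({m} : Set M)) :=
        nr_smul_singleton_submodule hB.1.1 (nr_ideal_left hB) m
      have hP' : A • (B • ({m} : Set M)) ⊆ P := by
        rintro x ⟨a, ha, y, ⟨b', hb', z, hz, rfl⟩, rfl⟩
        show a • (b' • z) ∈ P
        rw [Set.mem_singleton_iff.mp hz, ← NearRingModule.mul_smul]
        exact hAB (Set.mul_mem_mul ha hb') m
      rcases h0 A (B • ({m} : Set M)) hA hsub hP' with h | h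
      · exact absurd h hc
      · exact h (Set.smul_mem_smul hb rfl)
  · -- 2-prime case
    intro h2
    refine ⟨hQideal, hQne, ?_⟩
    intro A B hA hB hAB
    by_cases hc : A • (Set.univ : Set M) ⊆ P
    · left; intro a ha m
      exact hc (Set.smul_mem_smul ha (Set.mem_univ m))
    · right; intro b hb m
      have hsub : IsRSubmodule R (B • ({m} : Set M)) :=
        nr_smul_singleton_submodule hB.1 hB.2 m
      have hP' : A • (B • ({m} : Set M)) ⊆ P := by
        rintro x ⟨a, ha, y, ⟨b', hb', z, hz, rfl⟩, rfl⟩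
        show a • (b' • z) ∈ P
        rw [Set.mem_singleton_iff.mp hz, ← NearRingModule.mul_smul]
        exact hAB (Set.mul_mem_mul ha hb') m
      rcases h2 A (B • ({m} : Set M)) hA hsub hP' with h | h
      · exact absurd h hc
      · exact h (Set.smul_mem_smul hb rfl)
  · -- 3-prime case
    intro h3
    refine ⟨hQideal, hQne, ?_⟩
    intro a b hab
    by_cases hc : a • (Set.univ : Set M) ⊆ P
    · left; intro m
      exact hc (Set.smul_mem_smul_set (Set.mem_univ m))
    · right; intro m
      have hP' : (({a} : Set R) * Set.univ) • ({b • m} : Set M) ⊆ P := by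
        rintro x ⟨y, ⟨a', ha', r, -, rfl⟩, z, hz, rfl⟩
        show (a' * r) • z ∈ P
        rw [Set.mem_singleton_iff.mp hz, ← NearRingModule.mul_smul,
          Set.mem_singleton_iff.mp ha']
        exact hab (Set.mul_mem_mul (Set.mul_mem_mul rfl (Set.mem_univ r)) rfl) m
      rcases h3 a (b • m) hP' with h | h
      · exact absurd h hc
      · exact h
end

section
/- Let R be a zero-symmetric right near-ring, M a near-ring module over R, and P an R-ideal of M with RM ⊄ P. Then: (a) if P is c-classical prime then P is 3-classical prime; (b) if P is 3-classical prime then P is 2-classical prime; (c) if P is 2-classical prime then P is 0-classical prime. -/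
open Pointwise

/-- for an `R`-ideal `P` of `M` with `RM ⊄ P`:
c-classical prime ⇒ 3-classical prime ⇒ 2-classical prime ⇒ 0-classical prime. -/
theorem stmt_3 {R M : Type*} [NearRing R] [AddGroup M] [NearRingModule R M]
    (P : Set M) (hP : IsRIdeal R P)
    (hRM : ¬ (Set.univ : Set R) • (Set.univ : Set M) ⊆ P) :
    (ClassicalCPrime R P → Classical3Prime R P) ∧
    (Classical3Prime R P → Classical2Prime R P) ∧
    (Classical2Prime R P → Classical0Prime R P) := by
  refine ⟨?_, ?_, ?_⟩
  · -- c-classical prime ⇒ 3-classical prime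
    intro hc a b N hN h
    by_cases haN : a • N ⊆ P
    · exact Or.inl haN
    · right
      have key : ∀ s : R, (b * s) • N ⊆ P := by
        intro s
        have hsub : ((({a} : Set R) * Set.univ) * ({b * s} : Set R)) • N ⊆ P := by
          intro x hx
          rw [Set.mem_smul] at hx
          obtain ⟨g, hg, n, hn, rfl⟩ := hx
          rw [Set.mem_mul] at hg
          obtain ⟨u, hu, v, hv, rfl⟩ := hg
          rw [Set.mem_mul] at hu
          obtain ⟨w, hw, r, -, rfl⟩ := hu
          rw [Set.mem_singleton_iff] at hw hv
          rw [hw, hv]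
          apply h
          exact Set.smul_mem_smul
            (Set.mul_mem_mul
              (Set.mul_mem_mul (Set.mem_singleton a) (Set.mem_univ r))
              (Set.mul_mem_mul (Set.mem_singleton b) (Set.mem_univ s))) hn
        rcases hc a (b * s) N hN hsub with h1 | h1
        · exact absurd h1 haN
        · exact h1
      have hsub2 : ((({b} : Set R) * Set.univ) * ({b} : Set R)) • N ⊆ P := by
        intro x hx
        rw [Set.mem_smul] at hx
        obtain ⟨g, hg, n, hn, rfl⟩ := hx
        rw [Set.mem_mul] at hg
        obtain ⟨u, hu, v, hv, rfl⟩ := hg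
        rw [Set.mem_mul] at hu
        obtain ⟨w, hw, r, -, rfl⟩ := hu
        rw [Set.mem_singleton_iff] at hw hv
        rw [hw, hv, mul_assoc]
        exact key (r * b) (Set.smul_mem_smul_set hn)
      rcases hc b b N hN hsub2 with h1 | h1
      · exact h1
      · exact h1
  · -- 3-classical prime ⇒ 2-classical prime
    intro h3 A B N hA hB hN h
    by_cases hAN : A • N ⊆ P
    · exact Or.inl hAN
    · right
      rw [Set.not_subset] at hAN
      obtain ⟨x0, hx0, hx0P⟩ := hAN
      rw [Set.mem_smul] at hx0
      obtain ⟨a, ha, n0, hn0, rfl⟩ := hx0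
      intro x hx
      rw [Set.mem_smul] at hx
      obtain ⟨b, hb, n, hn, rfl⟩ := hx
      have hsub : ((({a} : Set R) * Set.univ) * (({b} : Set R) * Set.univ)) • N ⊆ P := by
        intro x hx
        rw [Set.mem_smul] at hx
        obtain ⟨g, hg, m, hm, rfl⟩ := hx
        rw [Set.mem_mul] at hg
        obtain ⟨u, hu, v, hv, rfl⟩ := hg
        rw [Set.mem_mul] at hu
        obtain ⟨w, hw, r, -, rfl⟩ := hu
        rw [Set.mem_mul] at hv
        obtain ⟨w', hw', s, -, rfl⟩ := hv
        rw [Set.mem_singleton_iff] at hw hw'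
        rw [hw, hw']
        have e : (a * r) * (b * s) = (a * (r * b)) * s := by
          rw [mul_assoc, ← mul_assoc r b s, ← mul_assoc]
        rw [e, NearRingModule.mul_smul]
        exact h (Set.smul_mem_smul (Set.mul_mem_mul ha (hB.2 r b hb))
          (hN.2 s m hm))
      rcases h3 a b N hN hsub with h1 | h1
      · exact absurd (h1 (Set.smul_mem_smul_set hn0)) hx0P
      · exact h1 (Set.smul_mem_smul_set hn)
  · -- 2-classical prime ⇒ 0-classical prime
    intro h2 A B N hA hB hN h
    have ideal_sub : ∀ I : Set R, IsIdeal I → IsLeftRSubgroup I := by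
      intro I hI
      refine ⟨hI.1.1, fun r i hi => ?_⟩
      have := hI.2.2 r 0 i hi
      rwa [zero_add, NearRing.mul_zero, sub_zero] at this
    exact h2 A B N (ideal_sub A hA) (ideal_sub B hB) hN h
end

section
/- Let R be a zero-symmetric right near-ring and M a near-ring module over R. Then: (a) if M is a c-classical prime R-module then M is a 3-classical prime R-module; (b) if M is a 3-classical prime R-module then M is a 2-classical prime R-module; (c) if M is a 2-classical prime R-module then M is a 0-classical prime R-module. -/
open Pointwise

/-- `M` is a 0-classical prime `R`-module: `RM ≠ {0}` and `{0}` is a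
0-classical prime `R`-ideal of `M`. -/
def Classical0PrimeModule (R : Type*) [NearRing R] (M : Type*) [AddGroup M]
    [NearRingModule R M] : Prop :=
  (Set.univ : Set R) • (Set.univ : Set M) ≠ ({0} : Set M) ∧
    Classical0Prime R ({0} : Set M)

/-- `M` is a 2-classical prime `R`-module. -/
def Classical2PrimeModule (R : Type*) [NearRing R] (M : Type*) [AddGroup M]
    [NearRingModule R M] : Prop :=
  (Set.univ : Set R) • (Set.univ : Set M) ≠ ({0} : Set M) ∧
    Classical2Prime R ({0} : Set M)

/-- `M` is a 3-classical prime `R`-module. -/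
def Classical3PrimeModule (R : Type*) [NearRing R] (M : Type*) [AddGroup M]
    [NearRingModule R M] : Prop :=
  (Set.univ : Set R) • (Set.univ : Set M) ≠ ({0} : Set M) ∧
    Classical3Prime R ({0} : Set M)

/-- `M` is a c-classical prime `R`-module. -/
def ClassicalCPrimeModule (R : Type*) [NearRing R] (M : Type*) [AddGroup M]
    [NearRingModule R M] : Prop :=
  (Set.univ : Set R) • (Set.univ : Set M) ≠ ({0} : Set M) ∧
    ClassicalCPrime R ({0} : Set M)

/-- Statement 4: c-classical prime module ⇒ 3-classical prime module ⇒
2-classical prime module ⇒ 0-classical prime module. -/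
theorem stmt_4 {R M : Type*} [NearRing R] [AddGroup M] [NearRingModule R M] :
    (ClassicalCPrimeModule R M → Classical3PrimeModule R M) ∧
    (Classical3PrimeModule R M → Classical2PrimeModule R M) ∧
    (Classical2PrimeModule R M → Classical0PrimeModule R M) := by
  refine ⟨?_, ?_, ?_⟩
  · -- c ⇒ 3
    rintro ⟨hne, hc⟩
    refine ⟨hne, ?_⟩
    intro a b N hN hsub
    by_cases ha : a • N ⊆ ({0} : Set M)
    · exact Or.inl ha
    · right
      have key : ∀ s : R, (b * s) • N ⊆ ({0} : Set M) := by
        intro s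
        have h1 : (({a} : Set R) * Set.univ * ({b * s} : Set R)) • N ⊆ ({0} : Set M) := by
          rintro x ⟨y, hy, n, hn, rfl⟩
          obtain ⟨u, hu, v, hv, rfl⟩ := hy
          obtain ⟨p, hp, q, hq, rfl⟩ := hu
          simp only [Set.mem_singleton_iff] at hp hv
          rw [hp, hv]
          apply hsub
          exact ⟨(a * q) * (b * s),
            Set.mul_mem_mul ⟨a, rfl, q, Set.mem_univ q, rfl⟩
              ⟨b, rfl, s, Set.mem_univ s, rfl⟩, n, hn, rfl⟩
        rcases hc a (b * s) N hN h1 with h | h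
        · exact absurd h ha
        · exact h
      have h2 : (({b} : Set R) * Set.univ * ({b} : Set R)) • N ⊆ ({0} : Set M) := by
        rintro x ⟨y, hy, n, hn, rfl⟩
        obtain ⟨u, hu, v, hv, rfl⟩ := hy
        obtain ⟨p, hp, q, hq, rfl⟩ := hu
        simp only [Set.mem_singleton_iff] at hp hv
        rw [hp, hv]
        show ((b * q) * b) • n ∈ ({0} : Set M)
        have : ((b * q) * b) • n = (b * q) • (b • n) := NearRingModule.mul_smul _ _ _
        rw [this]
        exact key q ⟨b • n, hN.2 b n hn, rfl⟩
      rcases hc b b N hN h2 with h | h <;> exact h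
  · -- 3 ⇒ 2
    rintro ⟨hne, h3⟩
    refine ⟨hne, ?_⟩
    intro A B N hA hB hN hsub
    by_cases ha : A • N ⊆ ({0} : Set M)
    · exact Or.inl ha
    right
    rw [Set.not_subset] at ha
    obtain ⟨x, hx, hx0⟩ := ha
    obtain ⟨a, haA, n₀, hn₀, rfl⟩ := hx
    intro z hz
    obtain ⟨b, hbB, n, hn, rfl⟩ := hz
    have hyp : ((({a} : Set R) * Set.univ) * (({b} : Set R) * Set.univ)) • N ⊆
        ({0} : Set M) := by
      rintro w ⟨y, hy, m, hm, rfl⟩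
      obtain ⟨u, hu, v, hv, rfl⟩ := hy
      obtain ⟨p, hp, q, hq, rfl⟩ := hu
      obtain ⟨p', hp', q', hq', rfl⟩ := hv
      simp only [Set.mem_singleton_iff] at hp hp'
      rw [hp, hp']
      apply hsub
      refine ⟨a * (q * b), Set.mul_mem_mul haA (hB.2 q b hbB), q' • m,
        hN.2 q' m hm, ?_⟩
      show (a * (q * b)) • (q' • m) = ((a * q) * (b * q')) • m
      rw [← NearRingModule.mul_smul]
      congr 1
      simp [mul_assoc]
    rcases h3 a b N hN hyp with h | h
    · exact absurd (h ⟨n₀, hn₀, rfl⟩) hx0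
    · exact h ⟨n, hn, rfl⟩
  · -- 2 ⇒ 0
    rintro ⟨hne, h2⟩
    refine ⟨hne, ?_⟩
    intro A B N hA hB hN hsub
    have lsub : ∀ I : Set R, IsIdeal I → IsLeftRSubgroup I := by
      intro I hI
      refine ⟨hI.1.1, ?_⟩
      intro r i hi
      have := hI.2.2 r 0 i hi
      rwa [zero_add, NearRing.mul_zero, sub_zero] at this
    exact h2 A B N (lsub A hA) (lsub B hB) hN hsub
end

section
/- Let R be a near-field and n a positive integer. Then R^n is a c-classical prime R-module, i.e., R·R^n ≠ {0} and {0} is a c-classical prime R-ideal of R^n. -/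
open Pointwise

/-- A (right) near-field: a zero-symmetric right near-ring with identity in which the
nonzero elements form a group under multiplication; its additive group is abelian. -/
class NearField (R : Type*) extends NearRing R, One R where
  one_mul : ∀ a : R, 1 * a = a
  mul_one : ∀ a : R, a * 1 = a
  add_comm : ∀ a b : R, a + b = b + a
  one_ne_zero : (1 : R) ≠ 0
  exists_mul_inv : ∀ a : R, a ≠ 0 → ∃ b : R, a * b = 1 ∧ b * a = 1

/-- The near-ring module `R^n` with componentwise addition and scalar action
`r • (v₁, …, vₙ) = (r v₁, …, r vₙ)`. -/
instance piNearRingModule (R : Type*) [NearRing R] (n : ℕ) :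
    NearRingModule R (Fin n → R) where
  smul r v := fun i => r * v i
  add_smul r s m := funext fun i => NearRing.right_distrib r s (m i)
  mul_smul r s m := funext fun i => mul_assoc r s (m i)

/-- over a near-field `R`, `R^n` is a c-classical prime `R`-module:
`R • R^n ≠ {0}` and `{0}` is a c-classical prime `R`-ideal of `R^n`. -/
theorem stmt_6 {R : Type*} [NearField R] (n : ℕ) (hn : 0 < n) :
    ClassicalCPrimeModule R (Fin n → R) := by
  have zero_mul' : ∀ a : R, (0:R) * a = 0 := by
    intro a
    have h := NearRing.right_distrib (0:R) 0 a
    rw [add_zero] at h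
    exact left_eq_add.mp h
  constructor
  · intro h
    have hmem : ((1:R) • (fun _ : Fin n => (1:R)) : Fin n → R) ∈
        (Set.univ : Set R) • (Set.univ : Set (Fin n → R)) :=
      Set.smul_mem_smul (Set.mem_univ _) (Set.mem_univ _)
    rw [h] at hmem
    have h0 : ((1:R) • (fun _ : Fin n => (1:R)) : Fin n → R) = 0 := hmem
    have h1 : (1:R) * 1 = 0 := congrFun h0 ⟨0, hn⟩
    rw [NearField.one_mul] at h1
    exact NearField.one_ne_zero h1
  · intro a b N hN h
    by_cases ha : a = 0
    · left
      intro x hx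
      obtain ⟨m, hm, rfl⟩ := Set.mem_smul_set.mp hx
      have : a • m = 0 := funext fun i => by
        show a * m i = 0
        rw [ha, zero_mul']
      simpa using this
    · right
      obtain ⟨s, hs1, hs2⟩ := NearField.exists_mul_inv a ha
      intro x hx
      obtain ⟨m, hm, rfl⟩ := Set.mem_smul_set.mp hx
      have hmem : a * s * b ∈ ({a} : Set R) * Set.univ * ({b} : Set R) :=
        Set.mul_mem_mul (Set.mul_mem_mul rfl (Set.mem_univ s)) rfl
      have h2 : (a * s * b) • m ∈ ({0} : Set (Fin n → R)) :=
        h (Set.smul_mem_smul hmem hm)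
      rw [hs1, NearField.one_mul] at h2
      exact h2
end

section
/- Let R be a zero-symmetric right near-ring with identity 1, M a near-ring module over R, and P an R-ideal of M with RM ⊄ P. Then P is 2-classical prime if and only if P is 3-classical prime. -/
open Pointwise

/-- Statement 7: over a near-ring with identity, an `R`-ideal `P` of `M` with `RM ⊄ P`
is 2-classical prime iff it is 3-classical prime. -/
theorem stmt_7 {R M : Type*} [NearRing R] [One R] [AddGroup M] [NearRingModule R M]
    (h1l : ∀ r : R, 1 * r = r) (h1r : ∀ r : R, r * 1 = r)
    (h1m : ∀ m : M, (1 : R) • m = m)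
    (P : Set M) (hP : IsRIdeal R P)
    (hRM : ¬ (Set.univ : Set R) • (Set.univ : Set M) ⊆ P) :
    Classical2Prime R P ↔ Classical3Prime R P := by
  have zmul : ∀ a : R, (0 : R) * a = 0 := by
    intro a
    have h : ((0 : R) + 0) * a = 0 * a + 0 * a := NearRing.right_distrib 0 0 a
    rw [add_zero] at h
    exact (left_eq_add.mp h)
  have negmul : ∀ r a : R, (-r) * a = -(r * a) := by
    intro r a
    have h : (r + -r) * a = r * a + (-r) * a := NearRing.right_distrib r (-r) a
    rw [add_neg_cancel, zmul] at h
    exact (neg_eq_of_add_eq_zero_right h.symm).symm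
  have zsmul : ∀ m : M, (0 : R) • m = 0 := by
    intro m
    have h : ((0 : R) + 0) • m = (0:R) • m + (0:R) • m := NearRingModule.add_smul 0 0 m
    rw [add_zero] at h
    exact left_eq_add.mp h
  have smulz : ∀ r : R, r • (0 : M) = 0 := by
    intro r
    calc r • (0 : M) = r • ((0:R) • (0:M)) := by rw [zsmul]
    _ = (r * 0) • (0:M) := (NearRingModule.mul_smul r 0 0).symm
    _ = (0:R) • (0:M) := by rw [NearRing.mul_zero]
    _ = 0 := zsmul 0
  have Psmul : ∀ (r : R) (p : M), p ∈ P → r • p ∈ P := by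
    intro r p hp
    have h := hP.2 r 0 p hp
    rwa [zero_add, smulz, sub_zero] at h
  have memU : ∀ c x : R, x ∈ (Set.univ : Set R) * ({c} : Set R) ↔ ∃ r : R, x = r * c := by
    intro c x
    constructor
    · rintro ⟨r, -, c', hc', rfl⟩
      exact ⟨r, by rw [Set.mem_singleton_iff.mp hc']⟩
    · rintro ⟨r, rfl⟩
      exact ⟨r, trivial, c, rfl, rfl⟩
  have memS : ∀ c x : R, x ∈ ({c} : Set R) * (Set.univ : Set R) ↔ ∃ r : R, x = c * r := by
    intro c x
    constructor
    · rintro ⟨c', hc', r, -, rfl⟩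
      exact ⟨r, by rw [Set.mem_singleton_iff.mp hc']⟩
    · rintro ⟨r, rfl⟩
      exact ⟨c, rfl, r, trivial, rfl⟩
  constructor
  · -- 2 ⇒ 3
    intro h2 a b N hN hsub
    have hsubgrp : ∀ c : R, IsLeftRSubgroup ((Set.univ : Set R) * {c}) := by
      intro c
      refine ⟨⟨(memU c 0).mpr ⟨0, (zmul c).symm⟩, ?_, ?_⟩, ?_⟩
      · intro x hx y hy
        obtain ⟨r, rfl⟩ := (memU c x).mp hx
        obtain ⟨s, rfl⟩ := (memU c y).mp hy
        exact (memU c _).mpr ⟨r + s, (NearRing.right_distrib r s c).symm⟩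
      · intro x hx
        obtain ⟨r, rfl⟩ := (memU c x).mp hx
        exact (memU c _).mpr ⟨-r, (negmul r c).symm⟩
      · intro t x hx
        obtain ⟨r, rfl⟩ := (memU c x).mp hx
        exact (memU c _).mpr ⟨t * r, (mul_assoc t r c).symm⟩
    have key : (((Set.univ : Set R) * {a}) * ((Set.univ : Set R) * {b})) • N ⊆ P := by
      rintro x ⟨z, ⟨x₁, hx₁, x₂, hx₂, rfl⟩, n, hn, rfl⟩
      obtain ⟨r, rfl⟩ := (memU a x₁).mp hx₁
      obtain ⟨s, rfl⟩ := (memU b x₂).mp hx₂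
      have hmem : ((a * s) * (b * 1)) • n ∈ P :=
        hsub ⟨(a * s) * (b * 1),
          ⟨a * s, (memS a _).mpr ⟨s, rfl⟩, b * 1, (memS b _).mpr ⟨1, rfl⟩, rfl⟩, n, hn, rfl⟩
      have hre : (r * a) * (s * b) = r * ((a * s) * (b * 1)) := by
        rw [h1r b, mul_assoc, mul_assoc]
      have heq : ((r * a) * (s * b)) • n = r • (((a * s) * (b * 1)) • n) := by
        rw [hre]; exact NearRingModule.mul_smul _ _ _
      show ((r * a) * (s * b)) • n ∈ P
      rw [heq]; exact Psmul r _ hmem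
    rcases h2 _ _ N (hsubgrp a) (hsubgrp b) hN key with h | h
    · left
      rintro x ⟨n, hn, rfl⟩
      have : (1 * a) • n ∈ P := h ⟨1 * a, (memU a _).mpr ⟨1, rfl⟩, n, hn, rfl⟩
      rwa [h1l] at this
    · right
      rintro x ⟨n, hn, rfl⟩
      have : (1 * b) • n ∈ P := h ⟨1 * b, (memU b _).mpr ⟨1, rfl⟩, n, hn, rfl⟩
      rwa [h1l] at this
  · -- 3 ⇒ 2
    intro h3 A B N hA hB hN hsub
    by_contra hcon
    push_neg at hcon
    obtain ⟨hAn, hBn⟩ := hcon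
    obtain ⟨x, hxAN, hxP⟩ := Set.not_subset.mp hAn
    obtain ⟨a, haA, n₁, hn₁, rfl⟩ := hxAN
    obtain ⟨y, hyBN, hyP⟩ := Set.not_subset.mp hBn
    obtain ⟨b, hbB, n₂, hn₂, rfl⟩ := hyBN
    have key : ((({a} : Set R) * Set.univ) * (({b} : Set R) * Set.univ)) • N ⊆ P := by
      rintro x ⟨z, ⟨x₁, hx₁, x₂, hx₂, rfl⟩, n, hn, rfl⟩
      obtain ⟨r, rfl⟩ := (memS a x₁).mp hx₁
      obtain ⟨s, rfl⟩ := (memS b x₂).mp hx₂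
      have hre : (a * r) * (b * s) = (a * (r * b)) * s := by
        simp only [mul_assoc]
      have heq : ((a * r) * (b * s)) • n = (a * (r * b)) • (s • n) := by
        rw [hre]; exact NearRingModule.mul_smul _ _ _
      show ((a * r) * (b * s)) • n ∈ P
      rw [heq]
      exact hsub ⟨a * (r * b), ⟨a, haA, r * b, hB.2 r b hbB, rfl⟩, s • n, hN.2 s n hn, rfl⟩
    rcases h3 a b N hN key with h | h
    · exact hxP (h ⟨n₁, hn₁, rfl⟩)
    · exact hyP (h ⟨n₂, hn₂, rfl⟩)
end

section
/- Let R be a zero-symmetric right near-ring with identity and M a 3-prime R-module (i.e., RM ≠ {0} and {0} is a 3-prime R-ideal of M). Then M is faithful (rM = {0} implies r = 0 for r ∈ R) if and only if Ann(gen(m)) = {0} for every nonzero m ∈ M, where gen(m) = Rm is the smallest R-submodule of M containing m. -/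
open Pointwise

/-- `gen(m)`: the smallest `R`-submodule of `M` containing `m`, i.e. the intersection
of all `R`-submodules of `M` containing `m`. -/
def genSet (R : Type*) [NearRing R] {M : Type*} [AddGroup M] [NearRingModule R M]
    (m : M) : Set M :=
  ⋂₀ {N : Set M | IsRSubmodule R N ∧ m ∈ N}

/-- Statement 18: for a 3-prime module `M` over a near-ring `R` with identity,
`M` is faithful iff `Ann(gen(m)) = {0}` for every nonzero `m ∈ M`. -/
theorem stmt_18 {R M : Type*} [NearRing R] [One R] [AddGroup M] [NearRingModule R M]
    (h1l : ∀ r : R, 1 * r = r) (h1r : ∀ r : R, r * 1 = r)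
    (h1m : ∀ m : M, (1 : R) • m = m)
    (hRM : (Set.univ : Set R) • (Set.univ : Set M) ≠ ({0} : Set M))
    (h3 : Prime3 R ({0} : Set M)) :
    (∀ r : R, (∀ m : M, r • m = 0) → r = 0) ↔
      ∀ m : M, m ≠ 0 → {r : R | ∀ x ∈ genSet R m, r • x = 0} = ({0} : Set R) := by
  have zsmul : ∀ x : M, (0 : R) • x = 0 := by
    intro x
    have h := NearRingModule.add_smul (0 : R) 0 x
    rw [add_zero] at h
    exact add_left_cancel (h.symm.trans (add_zero ((0:R) • x)).symm)
  constructor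
  · intro hf m hm
    ext r
    simp only [Set.mem_setOf_eq, Set.mem_singleton_iff]
    constructor
    · intro hr
      -- r annihilates gen(m); show rRm = 0
      have hmem : ∀ s : R, s • m ∈ genSet R m := by
        intro s
        intro N hN
        exact hN.1.2 s m hN.2
      have hsub : (({r} : Set R) * Set.univ) • ({m} : Set M) ⊆ ({0} : Set M) := by
        rintro x hx
        rw [Set.mem_smul] at hx
        obtain ⟨a, ha, b, hb, rfl⟩ := hx
        obtain ⟨c, hc, d, hd, rfl⟩ := ha
        rw [Set.mem_singleton_iff] at hc hb
        subst hc
        rw [hb, Set.mem_singleton_iff, NearRingModule.mul_smul]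
        exact hr (d • m) (hmem d)
      rcases h3 r m hsub with h | h
      · apply hf
        intro x
        have : r • x ∈ ({0} : Set M) := h (Set.smul_mem_smul_set (Set.mem_univ x))
        exact this
      · exact absurd h hm
    · rintro rfl
      intro x _
      exact zsmul x
  · intro hA r hr
    -- first find a nonzero m
    by_cases hM : ∀ x : M, x = 0
    · exfalso
      apply hRM
      ext x
      simp only [Set.mem_singleton_iff]
      constructor
      · intro _; exact hM x
      · rintro rfl
        have : (0 : R) • (0 : M) ∈ (Set.univ : Set R) • (Set.univ : Set M) :=
          Set.smul_mem_smul (Set.mem_univ _) (Set.mem_univ _)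
        rwa [zsmul] at this
    · push_neg at hM
      obtain ⟨m, hm⟩ := hM
      have : r ∈ ({0} : Set R) := by
        rw [← hA m hm]
        intro x _
        exact hr x
      exact this
end
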